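/- For every partition λ, the character polynomial q_λ equals the image of the irreducible character symmetric function s̃_λ under the substitution p_k ↦ Σ_{d|k} d·x_d, and conversely s̃_λ is obtained from q_λ by the substitution x_k ↦ (1/k) Σ_{d|k} μ(k/d) p_d. -/

import Mathlib

open scoped BigOperators

noncomputable section

/-- The ring of symmetric functions over `ℚ`, realized as the free commutative
`ℚ`-algebra on the power sums `p_1, p_2, p_3, …`. -/
abbrev SymF : Type := MvPolynomial ℕ+ ℚ

/-- The power sum symmetric function `p_k`. -/
def pp (k : ℕ+) : SymF := MvPolynomial.X k

/-- `p_μ = p_{μ_1} p_{μ_2} ⋯` for a partition `μ` (a multiset of positive parts). -/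
def pProd (mu : Multiset ℕ+) : SymF := (mu.map pp).prod

/-- The size `|μ|` of a partition. -/
def psize (mu : Multiset ℕ+) : ℕ := (mu.map (fun i => (i : ℕ))).sum

/-- The largest part `μ_1` of a partition (0 for the empty partition). -/
def maxPart (mu : Multiset ℕ+) : ℕ := (mu.map (fun i => (i : ℕ))).sup

/-- `z_μ = ∏_i m_i(μ)! · i^{m_i(μ)}`. -/
def zMult (mu : Multiset ℕ+) : ℕ :=
  (mu.map (fun i => (i : ℕ))).prod * ∏ i ∈ mu.toFinset, (mu.count i).factorial

/-- `Ξ_μ` : the multiset of eigenvalues of a permutation matrix of cycle type `μ`,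
i.e. the multiset union over all parts `μ_i` of all `μ_i`-th roots of unity. -/
def Xi (mu : Multiset ℕ+) : Multiset ℂ :=
  mu.bind (fun k => (Multiset.range (k : ℕ)).map
    (fun j => Complex.exp (2 * (Real.pi : ℂ) * Complex.I * (j : ℂ) / ((k : ℕ) : ℂ))))

/-- Evaluation `f[Ξ_μ]` of a symmetric function at the eigenvalues of a permutation
matrix of cycle type `μ` : substitute each power sum `p_k` by the `k`-th power sum of
the members of the multiset `Ξ_μ`. -/
def evalXi (mu : Multiset ℕ+) (f : SymF) : ℂ :=
  MvPolynomial.aeval (fun k : ℕ+ => ((Xi mu).map (fun x => x ^ (k : ℕ))).sum) f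

/-- The complete homogeneous symmetric function `h_n = Σ_{μ ⊢ n} p_μ / z_μ`. -/
def hn (n : ℕ) : SymF :=
  ∑ᶠ mu ∈ {mu : Multiset ℕ+ | psize mu = n}, ((zMult mu : ℚ))⁻¹ • pProd mu

/-- `h_λ = h_{λ_1} h_{λ_2} ⋯`. -/
def hProd (lam : Multiset ℕ+) : SymF := (lam.map (fun i => hn (i : ℕ))).prod

/-- `h_a` for an integer index, with `h_a = 0` for `a < 0`. -/
def hZ (a : ℤ) : SymF := if 0 ≤ a then hn a.toNat else 0

/-- `h_l = h_{l_1} ⋯ h_{l_r}` for a list of row lengths. -/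
def hOfList (l : List ℕ) : SymF := (l.map hn).prod

/-- `z` of an exponent vector: the monomial `∏ p_k^{d_k}` is `p_γ` where `γ` has
`d_k` parts equal to `k`, and `zMon d = z_γ`. -/
def zMon (d : ℕ+ →₀ ℕ) : ℚ :=
  ∏ k ∈ d.support, ((d k).factorial : ℚ) * ((k : ℕ) : ℚ) ^ (d k)

/-- The Hall inner product on `SymF`, determined by `⟨p_γ, p_δ⟩ = δ_{γδ} z_γ`. -/
def hall (f g : SymF) : ℚ :=
  ∑ d ∈ f.support, f.coeff d * g.coeff d * zMon d

/-- The Schur function indexed by a list of row lengths, via the Jacobi–Trudi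
determinant `s_α = det(h_{α_i - i + j})`. -/
def schurOfList (l : List ℕ) : SymF :=
  (Matrix.of (fun i j : Fin l.length => hZ ((l.get i : ℤ) + (j : ℤ) - (i : ℤ)))).det

/-- The irreducible symmetric group character `χ^α(γ) = ⟨s_α, p_γ⟩`. -/
def chi (l : List ℕ) (gamma : Multiset ℕ+) : ℚ := hall (schurOfList l) (pProd gamma)

/-- The degree of a symmetric function (the power sum `p_k` having degree `k`). -/
def symDeg (f : SymF) : ℕ :=
  MvPolynomial.weightedTotalDegree (fun k : ℕ+ => (k : ℕ)) f

/-- The parts of a partition, sorted decreasingly `(λ_1, λ_2, …)`. -/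
def toList (lam : Multiset ℕ+) : List ℕ :=
  ((lam.map (fun i => (i : ℕ))).sort (· ≤ ·)).reverse

/-- The content multiset `{1^{λ_1}, 2^{λ_2}, …, ℓ^{λ_ℓ}}` of a partition. -/
def contentMultiset (lam : Multiset ℕ+) : Multiset ℕ :=
  (((toList lam).zipIdx.map Prod.swap).flatMap (fun ia => List.replicate ia.2 (ia.1 + 1)) : List ℕ)

/-- `π` is a multiset partition of the multiset `S`: a multiset of nonempty
multisets whose multiset union is `S`. -/
def IsMSP (pi : Multiset (Multiset ℕ)) (S : Multiset ℕ) : Prop :=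
  (0 : Multiset ℕ) ∉ pi ∧ pi.sum = S

/-- `m̃(π)`: the partition of `ℓ(π)` recording the multiplicities with which the
distinct blocks occur in the multiset partition `π`. -/
def mtilde (pi : Multiset (Multiset ℕ)) : Multiset ℕ+ :=
  pi.toFinset.val.map (fun B => (pi.count B).toPNat')

/-- The defining relation of the induced trivial character basis `h̃`:
`h_λ = Σ_{π ⊩ {1^{λ_1},…,ℓ^{λ_ℓ}}} h̃_{m̃(π)}` for every partition `λ`. -/
def HTdef (ht : Multiset ℕ+ → SymF) : Prop :=
  ∀ lam : Multiset ℕ+,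
    hProd lam =
      ∑ᶠ pi ∈ {pi : Multiset (Multiset ℕ) | IsMSP pi (contentMultiset lam)},
        ht (mtilde pi)

/-- The defining property of the irreducible character basis `s̃` : each `s̃_λ` has
degree `|λ|` and satisfies `s̃_λ[Ξ_γ] = χ^{(|γ|-|λ|,λ)}(γ)` whenever `|γ| ≥ |λ|+λ_1`. -/
def STdef (st : Multiset ℕ+ → SymF) : Prop :=
  ∀ lam : Multiset ℕ+,
    symDeg (st lam) = psize lam ∧
    ∀ gamma : Multiset ℕ+, psize lam + maxPart lam ≤ psize gamma →
      evalXi gamma (st lam) =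
        ((chi ((psize gamma - psize lam) :: toList lam) gamma : ℚ) : ℂ)

/-- The substitution `p_k ↦ Σ_{d ∣ k} d·x_d` (the variable `x_d` being realized as
the `d`-th generator), sending a symmetric function `f` to the associated polynomial
`q(x_1, x_2, …)` in the part-multiplicity variables. -/
def Phi : SymF →ₐ[ℚ] MvPolynomial ℕ+ ℚ :=
  MvPolynomial.aeval (fun k : ℕ+ =>
    ∑ d ∈ (k : ℕ).divisors, (d : MvPolynomial ℕ+ ℚ) * MvPolynomial.X d.toPNat')

/-- The inverse substitution `x_k ↦ (1/k) Σ_{d ∣ k} μ(k/d) p_d`, with `μ` the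
number-theoretic Möbius function. -/
def Psi : MvPolynomial ℕ+ ℚ →ₐ[ℚ] SymF :=
  MvPolynomial.aeval (fun k : ℕ+ =>
    (((k : ℕ) : ℚ))⁻¹ • ∑ d ∈ (k : ℕ).divisors,
      ((ArithmeticFunction.moebius ((k : ℕ) / d) : ℤ) : ℚ) • pp d.toPNat')

lemma rootSum (c : ℕ+) (k : ℕ) :
    ∑ j ∈ Finset.range (c : ℕ),
      Complex.exp (2 * (Real.pi : ℂ) * Complex.I * (j : ℂ) / ((c : ℕ) : ℂ)) ^ k
    = if (c : ℕ) ∣ k then ((c : ℕ) : ℂ) else 0 := by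
  have hc : (((c : ℕ) : ℂ)) ≠ 0 := by exact_mod_cast c.ne_zero
  set w : ℂ := Complex.exp (2 * (Real.pi : ℂ) * Complex.I * (k : ℂ) / ((c : ℕ) : ℂ)) with hw
  have hterm : ∀ j : ℕ,
      Complex.exp (2 * (Real.pi : ℂ) * Complex.I * (j : ℂ) / ((c : ℕ) : ℂ)) ^ k = w ^ j := by
    intro j
    rw [← Complex.exp_nat_mul, ← Complex.exp_nat_mul]
    congr 1
    ring
  simp only [hterm]
  by_cases hdvd : (c : ℕ) ∣ k
  · obtain ⟨t, rfl⟩ := hdvd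
    have hw1 : w = 1 := by
      rw [hw, Complex.exp_eq_one_iff]
      refine ⟨t, ?_⟩
      field_simp
      simp
    simp [hw1]
  · rw [if_neg hdvd]
    have hw1 : w ≠ 1 := by
      intro h
      rw [hw, Complex.exp_eq_one_iff] at h
      obtain ⟨n, hn⟩ := h
      have h2 : (2 * (Real.pi : ℂ) * Complex.I) ≠ 0 := by
        simp [Real.pi_ne_zero, Complex.I_ne_zero, Complex.ofReal_ne_zero]
      have hnc : (k : ℂ) = n * (c : ℕ) := by
        field_simp at hn
        have h3 : (2 * (Real.pi : ℂ) * Complex.I) * (k : ℂ)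
            = (2 * (Real.pi : ℂ) * Complex.I) * ((n : ℂ) * ((c:ℕ) : ℂ)) := by
          linear_combination (2 * (Real.pi : ℂ) * Complex.I) * hn
        exact mul_left_cancel₀ h2 h3
      have : (k : ℤ) = n * (c : ℕ) := by exact_mod_cast hnc
      exact hdvd (Int.natCast_dvd_natCast.mp ⟨n, by rw [this, mul_comm]⟩)
    have hwc : w ^ (c : ℕ) = 1 := by
      rw [← Complex.exp_nat_mul, Complex.exp_eq_one_iff]
      refine ⟨k, ?_⟩
      field_simp
      push_cast
      ring
    rw [geom_sum_eq hw1, hwc, sub_self, zero_div]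

lemma xiPow (m : ℕ+ →₀ ℕ) (k : ℕ+) :
    ((Xi (Finsupp.toMultiset m)).map (fun x => x ^ (k : ℕ))).sum
      = ∑ d ∈ ((k : ℕ)).divisors, ((d : ℂ)) * ((m d.toPNat' : ℕ) : ℂ) := by
  classical
  rw [Xi, Multiset.map_bind, Multiset.sum_bind]
  have hS : ∀ c : ℕ+,
      ((((Multiset.range (c : ℕ)).map
        (fun j => Complex.exp (2 * (Real.pi : ℂ) * Complex.I * (j : ℂ) / ((c : ℕ) : ℂ)))).map
          (fun x => x ^ (k : ℕ))).sum)
      = if (c : ℕ) ∣ (k : ℕ) then ((c : ℕ) : ℂ) else 0 := by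
    intro c
    simp only [bind_pure_comp, Multiset.fmap_def, Multiset.map_map, ← rootSum c (k : ℕ)]
    rfl
  calc ((Finsupp.toMultiset m).map _).sum
      = ((Finsupp.toMultiset m).map
          (fun c : ℕ+ => if (c : ℕ) ∣ (k : ℕ) then ((c : ℕ) : ℂ) else 0)).sum := by
        exact congrArg _ (Multiset.map_congr rfl (fun c _ => hS c))
    _ = ∑ c ∈ (Finsupp.toMultiset m).toFinset,
          (Finsupp.toMultiset m).count c • (if (c : ℕ) ∣ (k : ℕ) then ((c : ℕ) : ℂ) else 0) :=
        Finset.sum_multiset_map_count _ _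
    _ = ∑ c ∈ m.support, (if (c : ℕ) ∣ (k : ℕ) then (m c) • ((c : ℕ) : ℂ) else 0) := by
        rw [Finsupp.toFinset_toMultiset]
        refine Finset.sum_congr rfl (fun c _ => ?_)
        rw [Finsupp.count_toMultiset, smul_ite, smul_zero]
    _ = ∑ c ∈ m.support.filter (fun c : ℕ+ => (c : ℕ) ∣ (k : ℕ)),
          (m c) • ((c : ℕ) : ℂ) := (Finset.sum_filter _ _).symm
    _ = ∑ d ∈ ((k : ℕ)).divisors.filter (fun d => d.toPNat' ∈ m.support),
          ((d : ℂ)) * ((m d.toPNat' : ℕ) : ℂ) := by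
        refine Finset.sum_nbij' (i := fun c : ℕ+ => (c : ℕ)) (j := fun d : ℕ => d.toPNat')
          ?_ ?_ ?_ ?_ ?_
        · intro c hc
          simp only [Finset.mem_filter, Finsupp.mem_support_iff] at hc ⊢
          refine ⟨Nat.mem_divisors.mpr ⟨hc.2, k.ne_zero⟩, ?_⟩
          rw [PNat.coe_toPNat']
          exact hc.1
        · intro d hd
          simp only [Finset.mem_filter, Nat.mem_divisors, Finsupp.mem_support_iff] at hd ⊢
          exact ⟨hd.2, by rw [PNat.toPNat'_coe (Nat.pos_of_mem_divisors
            (Nat.mem_divisors.mpr hd.1))]; exact hd.1.1⟩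
        · intro c _; exact PNat.coe_toPNat' c
        · intro d hd
          simp only [Finset.mem_filter, Nat.mem_divisors] at hd
          exact PNat.toPNat'_coe (Nat.pos_of_mem_divisors (Nat.mem_divisors.mpr hd.1))
        · intro c _
          rw [PNat.coe_toPNat', nsmul_eq_mul, mul_comm]
    _ = ∑ d ∈ ((k : ℕ)).divisors, ((d : ℂ)) * ((m d.toPNat' : ℕ) : ℂ) := by
        refine Finset.sum_filter_of_ne (fun d _ hne => ?_)
        simp only [Finsupp.mem_support_iff]
        intro h0
        exact hne (by rw [h0]; simp)

lemma evalXi_phi (m : ℕ+ →₀ ℕ) (f : SymF) :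
    evalXi (Finsupp.toMultiset m) f
      = algebraMap ℚ ℂ
          (MvPolynomial.eval (fun k : ℕ+ => ((m k : ℕ) : ℚ)) (Phi f)) := by
  set v : ℕ+ → ℚ := fun k : ℕ+ => ((m k : ℕ) : ℚ) with hv
  have haev : ∀ p : MvPolynomial ℕ+ ℚ, MvPolynomial.aeval v p = MvPolynomial.eval v p := by
    intro p
    rw [← MvPolynomial.coe_aeval_eq_eval]
    rfl
  have hAlg : (MvPolynomial.aeval
        (fun k : ℕ+ => ((Xi (Finsupp.toMultiset m)).map (fun x => x ^ (k : ℕ))).sum)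
        : SymF →ₐ[ℚ] ℂ)
      = ((Algebra.ofId ℚ ℂ).comp ((MvPolynomial.aeval v).comp Phi)) := by
    apply MvPolynomial.algHom_ext
    intro k
    rw [MvPolynomial.aeval_X, xiPow m k]
    simp only [AlgHom.comp_apply]
    rw [Phi, MvPolynomial.aeval_X, haev]
    rw [map_sum]
    simp only [map_mul, Algebra.ofId_apply, map_sum]
    refine Finset.sum_congr rfl (fun d _ => ?_)
    simp [v]
  rw [evalXi, hAlg]
  simp only [AlgHom.comp_apply]
  rw [haev]
  rfl

lemma psi_phi (f : SymF) : Psi (Phi f) = f := by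
  have key : ∀ k : ℕ+, Psi (Phi (MvPolynomial.X k)) = MvPolynomial.X k := by
    intro k
    set G : ℕ → SymF := fun n => ∑ e ∈ n.divisors,
      ((ArithmeticFunction.moebius (n / e) : ℤ) : ℚ) • pp e.toPNat' with hG
    have hPsiX : ∀ n : ℕ, 0 < n → Psi (MvPolynomial.X n.toPNat') = ((n : ℚ))⁻¹ • G n := by
      intro n hn
      rw [Psi, MvPolynomial.aeval_X]
      congr 1
      · rw [PNat.toPNat'_coe hn]
      · rw [hG]
        congr 1 <;> rw [PNat.toPNat'_coe hn]
    have step1 : Psi (Phi (MvPolynomial.X k)) = ∑ d ∈ (k : ℕ).divisors, G d := by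
      rw [Phi, MvPolynomial.aeval_X, map_sum]
      refine Finset.sum_congr rfl (fun d hd => ?_)
      have hd0 : 0 < d := Nat.pos_of_mem_divisors hd
      rw [map_mul, map_natCast, hPsiX d hd0, ← nsmul_eq_mul,
        ← Nat.cast_smul_eq_nsmul ℚ d, smul_smul,
        mul_inv_cancel₀ (by exact_mod_cast hd0.ne' : (d:ℚ) ≠ 0), one_smul]
    rw [step1]
    have inv := (ArithmeticFunction.sum_eq_iff_sum_smul_moebius_eq
      (R := SymF) (f := G) (g := fun n => pp n.toPNat')).mpr
    have h2 : ∀ n > 0, ∑ x ∈ n.divisorsAntidiagonal,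
        ArithmeticFunction.moebius x.fst • pp x.snd.toPNat' = G n := by
      intro n hn
      rw [Nat.sum_divisorsAntidiagonal' (f := fun x y => ArithmeticFunction.moebius x • pp y.toPNat')]
      rw [hG]
      refine Finset.sum_congr rfl (fun e he => ?_)
      rw [Int.cast_smul_eq_zsmul]
    have := inv h2 (k : ℕ) k.pos
    rw [this, PNat.coe_toPNat', pp]
  have : Psi.comp Phi = AlgHom.id ℚ SymF := MvPolynomial.algHom_ext (fun k => by
    simpa using key k)
  calc Psi (Phi f) = (Psi.comp Phi) f := rfl
    _ = f := by rw [this]; rfl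

lemma eval_nat_zero (P : MvPolynomial ℕ+ ℚ)
    (h : ∀ m : ℕ+ →₀ ℕ, MvPolynomial.eval (fun k : ℕ+ => ((m k : ℕ) : ℚ)) P = 0) :
    P = 0 := by
  classical
  have main : ∀ s : Finset ℕ+, ∀ v : ℕ+ → ℚ,
      (∀ k, k ∉ s → ∃ n : ℕ, v k = n) → MvPolynomial.eval v P = 0 := by
    intro s
    induction s using Finset.induction_on with
    | empty =>
      intro v hv
      choose n hn using fun k => hv k (Finset.notMem_empty k)
      set m : ℕ+ →₀ ℕ := Finsupp.onFinset P.vars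
        (fun k => if k ∈ P.vars then n k else 0)
        (fun k hk => by by_contra hmem; simp [hmem] at hk) with hm
      have heq : MvPolynomial.eval v P
          = MvPolynomial.eval (fun k : ℕ+ => ((m k : ℕ) : ℚ)) P := by
        refine MvPolynomial.eval₂Hom_congr' rfl (fun i hi _ => ?_) rfl
        simp [hm, Finsupp.onFinset_apply, hi, hn i]
      rw [heq]
      exact h m
    | @insert a s ha ih =>
      intro v hv
      set A : Polynomial ℚ := MvPolynomial.aeval
        (fun k : ℕ+ => if k = a then Polynomial.X else Polynomial.C (v k)) P with hA
      have hAeval : ∀ t : ℚ,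
          Polynomial.eval t A = MvPolynomial.eval (Function.update v a t) P := by
        intro t
        have hcomp := MvPolynomial.comp_aeval
          (f := fun k : ℕ+ => if k = a then Polynomial.X else Polynomial.C (v k))
          (φ := Polynomial.aeval t)
        have h1 : Polynomial.aeval t A
            = MvPolynomial.aeval (fun k : ℕ+ =>
                Polynomial.aeval t (if k = a then Polynomial.X else Polynomial.C (v k))) P :=
          AlgHom.congr_fun hcomp P
        rw [← Polynomial.coe_aeval_eq_eval, h1]
        have h2 : (fun k : ℕ+ =>
            Polynomial.aeval t (if k = a then Polynomial.X else Polynomial.C (v k)))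
            = Function.update v a t := by
          funext k
          by_cases hk : k = a <;> simp [hk, Function.update_apply]
        rw [h2, ← MvPolynomial.coe_aeval_eq_eval]
        rfl
      have hroots : ∀ n : ℕ, Polynomial.eval ((n : ℚ)) A = 0 := by
        intro t
        rw [hAeval]
        apply ih
        intro k hk
        rcases eq_or_ne k a with rfl | hka
        · exact ⟨t, by simp⟩
        · rw [Function.update_of_ne hka]
          exact hv k (by simp [hka, hk])
      have hA0 : A = 0 := by
        apply Polynomial.eq_zero_of_infinite_isRoot
        apply Set.infinite_of_injective_forall_mem (f := fun n : ℕ => (n : ℚ))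
        · exact Nat.cast_injective
        · intro n; exact hroots n
      have hfin := hAeval (v a)
      rw [hA0, Polynomial.eval_zero, Function.update_eq_self] at hfin
      exact hfin.symm
  apply MvPolynomial.funext (q := 0)
  intro x
  rw [map_zero]
  set x' : ℕ+ → ℚ := fun k => if k ∈ P.vars then x k else 0 with hx'
  have heq : MvPolynomial.eval x P = MvPolynomial.eval x' P := by
    refine MvPolynomial.eval₂Hom_congr' rfl (fun i hi _ => ?_) rfl
    simp [hx', hi]
  rw [heq]
  exact main P.vars x' (fun k hk => ⟨0, by simp [hx', hk]⟩)

lemma eval_large_zero (P : MvPolynomial ℕ+ ℚ) (N : ℕ)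
    (h : ∀ m : ℕ+ →₀ ℕ, N ≤ psize (Finsupp.toMultiset m) →
      MvPolynomial.eval (fun k : ℕ+ => ((m k : ℕ) : ℚ)) P = 0) :
    P = 0 := by
  classical
  apply eval_nat_zero
  intro m
  set B : Polynomial ℚ := MvPolynomial.aeval
    (fun k : ℕ+ => if k = 1 then Polynomial.C ((m k : ℚ)) + Polynomial.X
      else Polynomial.C ((m k : ℚ))) P with hB
  have hBeval : ∀ t : ℚ, Polynomial.eval t B
      = MvPolynomial.eval (fun k : ℕ+ => if k = 1 then (m k : ℚ) + t else (m k : ℚ)) P := by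
    intro t
    have hcomp := MvPolynomial.comp_aeval
      (f := fun k : ℕ+ => if k = 1 then Polynomial.C ((m k : ℚ)) + Polynomial.X
        else Polynomial.C ((m k : ℚ)))
      (φ := Polynomial.aeval t)
    have h1 : Polynomial.aeval t B
        = MvPolynomial.aeval (fun k : ℕ+ =>
            Polynomial.aeval t (if k = 1 then Polynomial.C ((m k : ℚ)) + Polynomial.X
              else Polynomial.C ((m k : ℚ)))) P :=
      AlgHom.congr_fun hcomp P
    rw [← Polynomial.coe_aeval_eq_eval, h1]
    have h2 : (fun k : ℕ+ =>
        Polynomial.aeval t (if k = 1 then Polynomial.C ((m k : ℚ)) + Polynomial.X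
          else Polynomial.C ((m k : ℚ))))
        = fun k : ℕ+ => if k = 1 then (m k : ℚ) + t else (m k : ℚ) := by
      funext k
      by_cases hk : k = 1 <;> simp [hk]
    rw [h2, ← MvPolynomial.coe_aeval_eq_eval]
    rfl
  have hpsize : ∀ t : ℕ, psize (Finsupp.toMultiset (m + Finsupp.single 1 t))
      = psize (Finsupp.toMultiset m) + t := by
    intro t
    simp [psize, Finsupp.toMultiset_add, Finsupp.toMultiset_single, bind_pure_comp,
      Multiset.fmap_def, Multiset.map_map, Multiset.sum_add, Multiset.map_nsmul, Multiset.sum_nsmul, Multiset.sum_singleton, smul_eq_mul, mul_one]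
  have hroots : ∀ n : ℕ, Polynomial.eval (((n + N : ℕ) : ℚ)) B = 0 := by
    intro n
    rw [hBeval]
    set m' : ℕ+ →₀ ℕ := m + Finsupp.single 1 (n + N) with hm'
    have heq : (fun k : ℕ+ => if k = 1 then (m k : ℚ) + ((n + N : ℕ) : ℚ) else (m k : ℚ))
        = fun k : ℕ+ => ((m' k : ℕ) : ℚ) := by
      funext k
      rcases eq_or_ne k 1 with rfl | hk
      · simp only [hm', Finsupp.add_apply, Finsupp.single_apply, if_pos rfl, if_true]
        push_cast
        ring
      · simp [hm', Finsupp.add_apply, Finsupp.single_apply, hk, Ne.symm hk]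
    rw [heq]
    apply h
    rw [hm', hpsize]
    omega
  have hB0 : B = 0 := by
    apply Polynomial.eq_zero_of_infinite_isRoot
    apply Set.infinite_of_injective_forall_mem (f := fun n : ℕ => ((n + N : ℕ) : ℚ))
    · intro a b hab
      have h2 : ((a + N : ℕ) : ℚ) = ((b + N : ℕ) : ℚ) := by simpa using hab
      have h3 : a + N = b + N := by exact_mod_cast h2
      omega
    · intro n; exact hroots n
  have hfin := hBeval 0
  rw [hB0, Polynomial.eval_zero] at hfin
  have heq0 : (fun k : ℕ+ => if k = 1 then (m k : ℚ) + 0 else (m k : ℚ))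
      = fun k : ℕ+ => ((m k : ℕ) : ℚ) := by
    funext k
    by_cases hk : k = 1 <;> simp [hk]
  rw [heq0] at hfin
  exact hfin.symm

/-- `q` is the character polynomial of `λ`: for every finitely supported vector of
part multiplicities `m = (m_1, m_2, …)` with `n = Σ_i i·m_i ≥ |λ| + λ_1`, evaluating
`q` at `x_i = m_i` gives `χ^{(n-|λ|,λ)}(1^{m_1} 2^{m_2} ⋯)`. -/
def IsCharPoly (lam : Multiset ℕ+) (q : MvPolynomial ℕ+ ℚ) : Prop :=
  ∀ m : ℕ+ →₀ ℕ,
    psize lam + maxPart lam ≤ psize (Finsupp.toMultiset m) →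
    MvPolynomial.eval (fun k : ℕ+ => ((m k : ℕ) : ℚ)) q =
      chi ((psize (Finsupp.toMultiset m) - psize lam) :: toList lam)
        (Finsupp.toMultiset m)

/-- For every partition `λ`, the character polynomial `q_λ` is the
image of the irreducible character symmetric function `s̃_λ` under the substitution
`p_k ↦ Σ_{d ∣ k} d·x_d`, and conversely `s̃_λ` is obtained from `q_λ` by the
substitution `x_k ↦ (1/k) Σ_{d ∣ k} μ(k/d) p_d`. -/
theorem charPoly_eq_phi_st (st : Multiset ℕ+ → SymF) (hst : STdef st)
    (lam : Multiset ℕ+) (q : MvPolynomial ℕ+ ℚ) (hq : IsCharPoly lam q) :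
    q = Phi (st lam) ∧ st lam = Psi q := by
  have hq' : q = Phi (st lam) := by
    have hmain : ∀ m : ℕ+ →₀ ℕ,
        psize lam + maxPart lam ≤ psize (Finsupp.toMultiset m) →
        MvPolynomial.eval (fun k : ℕ+ => ((m k : ℕ) : ℚ)) (Phi (st lam) - q) = 0 := by
      intro m hm
      have h1 := (hst lam).2 (Finsupp.toMultiset m) hm
      rw [evalXi_phi] at h1
      have h2 := hq m hm
      have h3 : MvPolynomial.eval (fun k : ℕ+ => ((m k : ℕ) : ℚ)) (Phi (st lam))
          = chi ((psize (Finsupp.toMultiset m) - psize lam) :: toList lam)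
              (Finsupp.toMultiset m) := by
        have inj : Function.Injective (algebraMap ℚ ℂ) := (algebraMap ℚ ℂ).injective
        apply inj
        rw [h1]; simp [eq_ratCast]
      rw [map_sub, h3, h2, sub_self]
    have hzero : Phi (st lam) - q = 0 :=
      eval_large_zero _ (psize lam + maxPart lam) hmain
    exact (sub_eq_zero.mp hzero).symm
  exact ⟨hq', by rw [hq', psi_phi]⟩

end
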